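/- arXiv:2306.11997 — 2 statements merged into one kernel-verified Lean document; each statement's English description precedes it below -/
import Mathlib

section
/- Let p ≡ 1 (mod 4) be a prime, let ω be a generator of the multiplicative group of the field Z_p, and set ε = ω^{(p−1)/4}. Then the (p−1)/4 blocks {(0,ω^i), (0,ε²·ω^i), (1,ε·ω^i), (1,ε³·ω^i)} for 0 ≤ i < (p−1)/4 form a (G,H,4,1)-difference family over G = Z_3 × Z_p with H = Z_3 × {0}; in particular, a (3p,3,4,1)-CDF exists for every prime p ≡ 1 (mod 4). -/
/-!
Since `ε ^ 2 = -1`, the block `B x = quarterBlock ε x = {(0, ±x), (1, ±εx)}` has as its twelve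
differences `(0, 2 εʲ x)`, `(1, (ε - 1) εʲ x)` and `(2, (1 - ε) εʲ x)` for `j < 4`. As `ε = ωⁿ`
with `4n = p - 1`, the products `εʲ ωⁱ` (`i < n`, `j < 4`) run through all of `Z_p^*`, so the
blocks `B ωⁱ` produce every element of `G ∖ H`; they produce `12n = |G ∖ H|` differences in total,
hence each exactly once. The Chinese remainder isomorphism `Z_3 × Z_p ≅ Z_{3p}` carries `H` onto
`pZ_{3p}` and turns the family into a CDF.
-/

/-- The multiset of differences `f - f'` (with `f ≠ f'`) from a finset `F`. -/
def blockDiffs {G : Type*} [AddGroup G] [DecidableEq G] (F : Finset G) : Multiset G :=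
  ((F ×ˢ F).filter fun p => p.1 ≠ p.2).val.map fun p => p.1 - p.2

/-- A `(gh,h,k,1)`-CDF (cyclic relative difference family): a family `𝓕` of
`k`-element subsets of `Z_{gh}` (base blocks, possibly with repetitions) such that
the multiset of differences from all base blocks contains every element of
`Z_{gh}` outside the subgroup `H = g·Z_{gh}` (of order `h`) exactly once and
contains no element of `H`. -/
def IsCDF (g h k : ℕ) (𝓕 : Multiset (Finset (ZMod (g * h)))) : Prop :=
  (∀ F ∈ 𝓕, F.card = k) ∧
  (∀ x : ZMod (g * h), x ∈ AddSubgroup.zmultiples ((g : ZMod (g * h))) →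
    (𝓕.bind blockDiffs).count x = 0) ∧
  (∀ x : ZMod (g * h), x ∉ AddSubgroup.zmultiples ((g : ZMod (g * h))) →
    (𝓕.bind blockDiffs).count x = 1)
/-- A `(G,H,k,1)`-difference family over a general additive group. -/
def IsDF {G : Type*} [AddGroup G] [DecidableEq G] (H : AddSubgroup G) (k : ℕ)
    (𝓕 : Multiset (Finset G)) : Prop :=
  (∀ F ∈ 𝓕, F.card = k) ∧
  (∀ x : G, x ∈ H → (𝓕.bind blockDiffs).count x = 0) ∧
  (∀ x : G, x ∉ H → (𝓕.bind blockDiffs).count x = 1)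

open Finset

theorem Finset.offDiag_map_equiv {α β : Type*} (e : α ≃ β) (s : Finset α) :
    (s.map e.toEmbedding).offDiag = s.offDiag.map (e.toEmbedding.prodMap e.toEmbedding) := by
  ext ⟨a, b⟩
  simp only [mem_offDiag, mem_map, Function.Embedding.prodMap, Prod.exists,
    Function.Embedding.coeFn_mk, Prod.map_apply, Prod.mk.injEq]
  constructor
  · rintro ⟨⟨a, ha, rfl⟩, ⟨b, hb, rfl⟩, hab⟩
    exact ⟨a, b, ⟨ha, hb, fun h => hab (congrArg e h)⟩, rfl, rfl⟩
  · rintro ⟨a, b, ⟨ha, hb, hab⟩, rfl, rfl⟩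
    exact ⟨⟨a, ha, rfl⟩, ⟨b, hb, rfl⟩, e.injective.ne hab⟩

theorem ZMod.mem_zmultiples_natCast_iff {m n : ℕ} (x : ZMod (m * n)) :
    x ∈ AddSubgroup.zmultiples (m : ZMod (m * n)) ↔
      ZMod.castHom (dvd_mul_right m n) (ZMod m) x = 0 := by
  constructor
  · rintro ⟨c, rfl⟩
    simp
  · obtain ⟨k, rfl⟩ := ZMod.intCast_surjective x
    rw [map_intCast, ZMod.intCast_zmod_eq_zero_iff_dvd]
    rintro ⟨c, rfl⟩
    exact ⟨c, by push_cast [zsmul_eq_mul]; ring⟩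

theorem ZMod.chineseRemainder_fst {m n : ℕ} (h : m.Coprime n) (x : ZMod (m * n)) :
    (ZMod.chineseRemainder h x).1 = ZMod.castHom (dvd_mul_right m n) (ZMod m) x := by
  simp [ZMod.chineseRemainder]

theorem exists_pow_pow_mul_pow_eq {G : Type*} [Group G] [Finite G] {ω u : G} {m n : ℕ}
    (hω : orderOf ω = m * n) (hu : u ∈ Subgroup.zpowers ω) :
    ∃ i < n, ∃ j < m, (ω ^ n) ^ j * ω ^ i = u := by
  classical
  obtain ⟨k, hk, rfl⟩ := Finset.mem_image.mp (mem_zpowers_iff_mem_range_orderOf.mp hu)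
  rw [Finset.mem_range, hω] at hk
  have hn : 0 < n := Nat.pos_of_mul_pos_left (Nat.zero_lt_of_lt hk)
  refine ⟨k % n, Nat.mod_lt k hn, k / n, (Nat.div_lt_iff_lt_mul hn).mpr hk, ?_⟩
  rw [← pow_mul, ← pow_add, Nat.div_add_mod]

theorem exists_pow_pow_mul_pow_eq_of_ne_zero {F : Type*} [Field F] [Finite F] {ω : Fˣ} {m n : ℕ}
    (hω : ∀ u : Fˣ, u ∈ Subgroup.zpowers ω) (hord : orderOf ω = m * n) {y : F} (hy : y ≠ 0) :
    ∃ i < n, ∃ j < m, ((ω : F) ^ n) ^ j * (ω : F) ^ i = y := by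
  obtain ⟨i, hi, j, hj, h⟩ := exists_pow_pow_mul_pow_eq hord (hω (Units.mk0 y hy))
  exact ⟨i, hi, j, hj, by simpa using congrArg Units.val h⟩

theorem IsPrimitiveRoot.pow_sq_eq_neg_one {R : Type*} [CommRing R] [IsDomain R] {ζ : R} {n : ℕ}
    (h : IsPrimitiveRoot ζ (4 * n)) (hn : n ≠ 0) : (ζ ^ n) ^ 2 = -1 := by
  rw [← pow_mul]
  refine IsPrimitiveRoot.eq_neg_one_of_two_right ?_
  have h2 := h.pow_of_dvd (p := n * 2) (by omega) ⟨2, by ring⟩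
  rwa [show 4 * n / (n * 2) = 2 by rw [show 4 * n = n * 2 * 2 by ring]; simp [hn]] at h2

section BlockDiffs

variable {G G' : Type*} [AddGroup G] [AddGroup G'] [DecidableEq G] [DecidableEq G']

theorem blockDiffs_eq_map_offDiag (F : Finset G) :
    blockDiffs F = F.offDiag.val.map fun p => p.1 - p.2 := by
  rw [blockDiffs]
  congr 2
  ext
  simp [and_assoc]

theorem card_blockDiffs (F : Finset G) : Multiset.card (blockDiffs F) = #F * #F - #F := by
  rw [blockDiffs_eq_map_offDiag, Multiset.card_map, Finset.card_val, offDiag_card]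

theorem mem_blockDiffs_of_sub_eq {F : Finset G} {a b d : G} (ha : a ∈ F) (hb : b ∈ F)
    (hd : d ≠ 0) (hab : a - b = d) : d ∈ blockDiffs F := by
  rw [blockDiffs_eq_map_offDiag]
  exact Multiset.mem_map.mpr
    ⟨(a, b), mem_offDiag.mpr ⟨ha, hb, fun h => hd (by rw [← hab, sub_eq_zero]; exact h)⟩, hab⟩

theorem neg_mem_blockDiffs {F : Finset G} {d : G} (hd : d ∈ blockDiffs F) :
    -d ∈ blockDiffs F := by
  rw [blockDiffs_eq_map_offDiag, Multiset.mem_map] at hd ⊢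
  obtain ⟨⟨a, b⟩, hab, rfl⟩ := hd
  obtain ⟨ha, hb, hne⟩ := mem_offDiag.mp hab
  exact ⟨(b, a), mem_offDiag.mpr ⟨hb, ha, hne.symm⟩, (neg_sub a b).symm⟩

theorem blockDiffs_map (e : G ≃+ G') (F : Finset G) :
    blockDiffs (F.map e.toEquiv.toEmbedding) = (blockDiffs F).map e := by
  simp only [blockDiffs_eq_map_offDiag, offDiag_map_equiv, map_val, Multiset.map_map]
  congr 1
  ext ⟨a, b⟩
  simp

theorem card_bind_blockDiffs {k : ℕ} {𝓕 : Multiset (Finset G)} (hcard : ∀ F ∈ 𝓕, #F = k) :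
    Multiset.card (𝓕.bind blockDiffs) = Multiset.card 𝓕 * (k * k - k) := by
  rw [Multiset.card_bind, Multiset.map_congr rfl (g := fun _ => k * k - k) fun F hF => by
      rw [Function.comp_apply, card_blockDiffs, hcard F hF],
    Multiset.map_const', Multiset.sum_replicate, smul_eq_mul]

theorem isDF_of_subset_bind_blockDiffs {H : AddSubgroup G} {k : ℕ} {𝓕 : Multiset (Finset G)}
    (S : Finset G) (hS : ∀ x, x ∈ S ↔ x ∉ H) (hcard : ∀ F ∈ 𝓕, #F = k)
    (hcover : ∀ x ∈ S, x ∈ 𝓕.bind blockDiffs) (hle : Multiset.card 𝓕 * (k * k - k) ≤ #S) :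
    IsDF H k 𝓕 := by
  have hdiffs : S.val = 𝓕.bind blockDiffs :=
    Multiset.eq_of_le_of_card_le ((Multiset.le_iff_subset S.nodup).mpr hcover)
      (by rwa [card_bind_blockDiffs hcard])
  refine ⟨hcard, fun x hx => ?_, fun x hx => ?_⟩
  · rw [← hdiffs]
    exact Multiset.count_eq_zero_of_notMem fun h => (hS x).mp h hx
  · rw [← hdiffs]
    exact Multiset.count_eq_one_of_mem S.nodup ((hS x).mpr hx)

theorem IsDF.map {H : AddSubgroup G} {k : ℕ} {𝓕 : Multiset (Finset G)} (h : IsDF H k 𝓕)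
    (e : G ≃+ G') :
    IsDF (H.map e.toAddMonoidHom) k (𝓕.map (Finset.map e.toEquiv.toEmbedding)) := by
  obtain ⟨hcard, hin, hout⟩ := h
  have hdiffs : (𝓕.map (Finset.map e.toEquiv.toEmbedding)).bind blockDiffs
      = (𝓕.bind blockDiffs).map e := by
    rw [Multiset.bind_map, Multiset.map_bind]
    exact Multiset.bind_congr fun F _ => blockDiffs_map e F
  have hcount (x : G') :
      ((𝓕.bind blockDiffs).map e).count x = (𝓕.bind blockDiffs).count (e.symm x) := by
    conv_lhs => rw [← e.apply_symm_apply x]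
    exact Multiset.count_map_eq_count' e _ e.injective _
  refine ⟨?_, fun x hx => ?_, fun x hx => ?_⟩
  · simp only [Multiset.mem_map]
    rintro _ ⟨F, hF, rfl⟩
    rw [card_map, hcard F hF]
  · rw [hdiffs, hcount]
    exact hin _ (AddSubgroup.mem_map_equiv.mp hx)
  · rw [hdiffs, hcount]
    exact hout _ (mt AddSubgroup.mem_map_equiv.mpr hx)

end BlockDiffs

theorem isCDF_of_isDF_prod {g h k : ℕ} (hgh : g.Coprime h)
    {𝓕 : Multiset (Finset (ZMod h × ZMod g))}
    (hDF : IsDF ((⊤ : AddSubgroup (ZMod h)).prod ⊥) k 𝓕) : ∃ 𝓕', IsCDF g h k 𝓕' := by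
  let e : ZMod h × ZMod g ≃+ ZMod (g * h) :=
    AddEquiv.prodComm.trans (ZMod.chineseRemainder hgh).symm.toAddEquiv
  have hH : ((⊤ : AddSubgroup (ZMod h)).prod ⊥).map e.toAddMonoidHom
      = AddSubgroup.zmultiples (g : ZMod (g * h)) := by
    ext x
    rw [AddSubgroup.mem_map_equiv, AddSubgroup.mem_prod, ZMod.mem_zmultiples_natCast_iff,
      ← ZMod.chineseRemainder_fst hgh]
    simp [e]
  exact ⟨_, hH ▸ hDF.map e⟩

section QuarterBlock

variable {F : Type*} [Field F] [DecidableEq F] {ε x : F}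

def quarterBlock (ε x : F) : Finset (ZMod 3 × F) :=
  {(0, x), (0, ε ^ 2 * x), (1, ε * x), (1, ε ^ 3 * x)}

theorem card_quarterBlock (hε : ε ^ 2 = -1) (h2 : (2 : F) ≠ 0) (hx : x ≠ 0) :
    #(quarterBlock ε x) = 4 := by
  have hε0 : ε ≠ 0 := by rintro rfl; simp at hε
  have h02 : x ≠ ε ^ 2 * x := fun h => mul_ne_zero h2 hx (by linear_combination h + x * hε)
  have h13 : ε * x ≠ ε ^ 3 * x := fun h =>
    mul_ne_zero (mul_ne_zero h2 hε0) hx (by linear_combination h + ε * x * hε)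
  rw [quarterBlock, card_insert_of_notMem (by simp [h02]), card_insert_of_notMem (by simp),
    card_insert_of_notMem (by simp [h13]), card_singleton]

theorem mk_zero_mem_blockDiffs_quarterBlock (hε : ε ^ 2 = -1) (h2 : (2 : F) ≠ 0) (hx : x ≠ 0)
    {j : ℕ} (hj : j < 4) : ((0 : ZMod 3), 2 * ε ^ j * x) ∈ blockDiffs (quarterBlock ε x) := by
  have hε0 : ε ≠ 0 := by rintro rfl; simp at hε
  have hne : ((0 : ZMod 3), 2 * ε ^ j * x) ≠ 0 := by simp [h2, hε0, hx]
  interval_cases j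
  · exact mem_blockDiffs_of_sub_eq (a := (0, x)) (b := (0, ε ^ 2 * x))
      (by simp [quarterBlock]) (by simp [quarterBlock]) hne
      (Prod.ext (by simp) (by simp only [Prod.snd_sub]; linear_combination -x * hε))
  · exact mem_blockDiffs_of_sub_eq (a := (1, ε * x)) (b := (1, ε ^ 3 * x))
      (by simp [quarterBlock]) (by simp [quarterBlock]) hne
      (Prod.ext (by simp) (by simp only [Prod.snd_sub]; linear_combination -ε * x * hε))
  · exact mem_blockDiffs_of_sub_eq (a := (0, ε ^ 2 * x)) (b := (0, x))
      (by simp [quarterBlock]) (by simp [quarterBlock]) hne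
      (Prod.ext (by simp) (by simp only [Prod.snd_sub]; linear_combination -x * hε))
  · exact mem_blockDiffs_of_sub_eq (a := (1, ε ^ 3 * x)) (b := (1, ε * x))
      (by simp [quarterBlock]) (by simp [quarterBlock]) hne
      (Prod.ext (by simp) (by simp only [Prod.snd_sub]; linear_combination -ε * x * hε))

theorem mk_one_mem_blockDiffs_quarterBlock (hε : ε ^ 2 = -1) {j : ℕ} (hj : j < 4) :
    ((1 : ZMod 3), (ε - 1) * ε ^ j * x) ∈ blockDiffs (quarterBlock ε x) := by
  have hne : ((1 : ZMod 3), (ε - 1) * ε ^ j * x) ≠ 0 := fun h => by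
    simpa using congrArg Prod.fst h
  interval_cases j
  · exact mem_blockDiffs_of_sub_eq (a := (1, ε * x)) (b := (0, x))
      (by simp [quarterBlock]) (by simp [quarterBlock]) hne
      (Prod.ext (by simp) (by simp only [Prod.snd_sub]; ring))
  · exact mem_blockDiffs_of_sub_eq (a := (1, ε ^ 3 * x)) (b := (0, x))
      (by simp [quarterBlock]) (by simp [quarterBlock]) hne
      (Prod.ext (by simp) (by simp only [Prod.snd_sub]; linear_combination (ε - 1) * x * hε))
  · exact mem_blockDiffs_of_sub_eq (a := (1, ε ^ 3 * x)) (b := (0, ε ^ 2 * x))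
      (by simp [quarterBlock]) (by simp [quarterBlock]) hne
      (Prod.ext (by simp) (by simp only [Prod.snd_sub]; ring))
  · exact mem_blockDiffs_of_sub_eq (a := (1, ε * x)) (b := (0, ε ^ 2 * x))
      (by simp [quarterBlock]) (by simp [quarterBlock]) hne
      (Prod.ext (by simp) (by simp only [Prod.snd_sub]; linear_combination (ε - ε ^ 2) * x * hε))

theorem exists_mem_blockDiffs_quarterBlock (hε : ε ^ 2 = -1) (h2 : (2 : F) ≠ 0) {n : ℕ}
    {x : ℕ → F} (hx : ∀ i, x i ≠ 0) (hcover : ∀ y ≠ 0, ∃ i < n, ∃ j < 4, ε ^ j * x i = y)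
    (c : ZMod 3) {y : F} (hy : y ≠ 0) : ∃ i < n, (c, y) ∈ blockDiffs (quarterBlock ε (x i)) := by
  have hε1 : ε - 1 ≠ 0 := fun h => h2 (by linear_combination hε - (ε + 1) * h)
  have hZMod3 : ∀ c : ZMod 3, c = 0 ∨ c = 1 ∨ c = 2 := by decide
  obtain rfl | rfl | rfl := hZMod3 c
  · obtain ⟨i, hi, j, hj, hij⟩ := hcover (y / 2) (div_ne_zero hy h2)
    refine ⟨i, hi, ?_⟩
    rw [← mul_div_cancel₀ y h2, ← hij, ← mul_assoc]
    exact mk_zero_mem_blockDiffs_quarterBlock hε h2 (hx i) hj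
  · obtain ⟨i, hi, j, hj, hij⟩ := hcover (y / (ε - 1)) (div_ne_zero hy hε1)
    refine ⟨i, hi, ?_⟩
    rw [← mul_div_cancel₀ y hε1, ← hij, ← mul_assoc]
    exact mk_one_mem_blockDiffs_quarterBlock hε hj
  · obtain ⟨i, hi, j, hj, hij⟩ := hcover (-y / (ε - 1)) (div_ne_zero (neg_ne_zero.mpr hy) hε1)
    refine ⟨i, hi, ?_⟩
    have hneg := neg_mem_blockDiffs (mk_one_mem_blockDiffs_quarterBlock (x := x i) hε hj)
    rwa [mul_assoc, hij, mul_div_cancel₀ _ hε1, show -((1 : ZMod 3), -y) = (2, y) from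
      Prod.ext rfl (neg_neg y)] at hneg

end QuarterBlock

theorem isDF_quarterBlocks {F : Type*} [Field F] [Fintype F] [DecidableEq F] {n : ℕ}
    (hq : Fintype.card F = 4 * n + 1) {ω : Fˣ} (hω : ∀ u : Fˣ, u ∈ Subgroup.zpowers ω) :
    IsDF ((⊤ : AddSubgroup (ZMod 3)).prod ⊥) 4
      ((Multiset.range n).map fun i => quarterBlock ((ω : F) ^ n) ((ω : F) ^ i)) := by
  have hord : orderOf ω = 4 * n := by
    rw [orderOf_eq_card_of_forall_mem_zpowers hω, Nat.card_eq_fintype_card, Fintype.card_units,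
      hq, Nat.add_sub_cancel]
  have hn : n ≠ 0 := by
    rintro rfl
    exact (Fintype.one_lt_card (α := F)).ne' hq
  have hε : ((ω : F) ^ n) ^ 2 = -1 :=
    (IsPrimitiveRoot.coe_units_iff.mpr (hord ▸ IsPrimitiveRoot.orderOf ω)).pow_sq_eq_neg_one hn
  have h2 : (2 : F) ≠ 0 := Ring.two_ne_zero (mt FiniteField.even_card_iff_char_two.mp (by omega))
  refine isDF_of_subset_bind_blockDiffs (univ ×ˢ {0}ᶜ) (fun _ => by simp [AddSubgroup.mem_prod])
    (by simp [card_quarterBlock hε h2]) (fun ⟨c, y⟩ hcy => ?_) ?_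
  · obtain ⟨i, hi, hmem⟩ := exists_mem_blockDiffs_quarterBlock hε h2 (fun i => by simp)
      (fun y hy => exists_pow_pow_mul_pow_eq_of_ne_zero hω hord hy) c (by simpa using hcy)
    exact Multiset.mem_bind.mpr ⟨_, Multiset.mem_map_of_mem _ (Multiset.mem_range.mpr hi), hmem⟩
  · simp only [Multiset.card_map, Multiset.card_range, card_product, card_univ, ZMod.card,
      card_compl, hq, card_singleton, add_tsub_cancel_right]
    omega

/-- Let `p ≡ 1 (mod 4)` be a prime, `ω` a generator of the multiplicative group of
`Z_p`, and `ε = ω^((p-1)/4)`. Then the blocks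
`{(0,ω^i), (0,ε²ω^i), (1,εω^i), (1,ε³ω^i)}`, `0 ≤ i < (p-1)/4`, form a
`(G,H,4,1)`-DF over `G = Z_3 × Z_p` relative to `H = Z_3 × {0}`; in particular a
`(3p,3,4,1)`-CDF exists. -/
theorem stmt_4 (p : ℕ) (hp : p.Prime) (hpmod : p % 4 = 1)
    (ω : (ZMod p)ˣ) (hω : ∀ u : (ZMod p)ˣ, u ∈ Subgroup.zpowers ω)
    (ε : (ZMod p)ˣ) (hε : ε = ω ^ ((p - 1) / 4)) :
    IsDF ((⊤ : AddSubgroup (ZMod 3)).prod (⊥ : AddSubgroup (ZMod p))) 4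
      ((Multiset.range ((p - 1) / 4)).map fun i =>
        ({((0 : ZMod 3), ((ω : ZMod p)) ^ i),
          ((0 : ZMod 3), ((ε ^ 2 : (ZMod p)ˣ) : ZMod p) * ((ω : ZMod p)) ^ i),
          ((1 : ZMod 3), ((ε : (ZMod p)ˣ) : ZMod p) * ((ω : ZMod p)) ^ i),
          ((1 : ZMod 3), ((ε ^ 3 : (ZMod p)ˣ) : ZMod p) * ((ω : ZMod p)) ^ i)} :
            Finset (ZMod 3 × ZMod p))) ∧
    ∃ 𝓕 : Multiset (Finset (ZMod (p * 3))), IsCDF p 3 4 𝓕 := by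
  have : Fact p.Prime := ⟨hp⟩
  have hDF := isDF_quarterBlocks (n := (p - 1) / 4) (by rw [ZMod.card]; omega) hω
  have hcop : p.Coprime 3 := (Nat.coprime_primes hp Nat.prime_three).mpr (by omega)
  subst hε
  simp only [Units.val_pow_eq_pow_val]
  exact ⟨hDF, isCDF_of_isDF_prod hcop hDF⟩
end

section
/- There exists a (6g,6,4,1)-CDF for every odd integer g with 7 ≤ g ≤ 35. -/
/-!
For each odd `g` in range the family consists of `(g - 1) / 2` explicit base blocks, found by
computer search; their `12 · (g - 1) / 2 = 6g - 6` differences are checked by evaluation to hit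
every residue off the subgroup `g · ℤ/6gℤ` exactly once. Membership in that subgroup is
divisibility of the canonical representative by `g`, which makes the check decidable.
-/

theorem ZMod.mem_zmultiples_natCast_iff_dvd_val {n g : ℕ} [NeZero n] (hg : g ∣ n) (x : ZMod n) :
    x ∈ AddSubgroup.zmultiples (g : ZMod n) ↔ g ∣ x.val := by
  rw [AddSubgroup.mem_zmultiples_iff]
  constructor
  · rintro ⟨k, rfl⟩
    rw [← Int.natCast_dvd_natCast, zsmul_eq_mul, ← Int.cast_natCast (R := ZMod n),
      ← Int.cast_mul, ZMod.val_intCast, Int.emod_def]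
    exact Int.dvd_sub (dvd_mul_left _ _) (dvd_mul_of_dvd_left (Int.natCast_dvd_natCast.mpr hg) _)
  · rintro ⟨t, ht⟩
    refine ⟨t, ?_⟩
    rw [natCast_zsmul, nsmul_eq_mul, ← ZMod.natCast_zmod_val x, ht, Nat.cast_mul, mul_comm]

theorem isCDF_of_count_natCast {g h k : ℕ} [NeZero (g * h)]
    {𝓕 : Multiset (Finset (ZMod (g * h)))}
    (hcard : ∀ F ∈ 𝓕, F.card = k)
    (hcount : ∀ n : ℕ, n < g * h →
      (𝓕.bind blockDiffs).count (n : ZMod (g * h)) = if g ∣ n then 0 else 1) :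
    IsCDF g h k 𝓕 := by
  have hcount' (x : ZMod (g * h)) :
      (𝓕.bind blockDiffs).count x = if g ∣ x.val then 0 else 1 := by
    simpa only [ZMod.natCast_zmod_val] using hcount x.val x.val_lt
  have hmem (x : ZMod (g * h)) := ZMod.mem_zmultiples_natCast_iff_dvd_val (dvd_mul_right g h) x
  exact ⟨hcard, fun x hx => by rw [hcount', if_pos ((hmem x).mp hx)],
    fun x hx => by rw [hcount', if_neg (mt (hmem x).mpr hx)]⟩

def baseBlocks : (g : ℕ) → Multiset (Finset (ZMod (g * 6)))
  | 7 => {{0,1,9,13}, {0,2,5,24}, {0,6,17,32}}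
  | 9 => {{0,1,38,41}, {0,2,22,48}, {0,4,15,25}, {0,5,24,47}}
  | 11 => {{0,1,14,37}, {0,2,5,59}, {0,4,20,28}, {0,6,25,40}, {0,10,27,45}}
  | 13 => {{0,1,59,75}, {0,2,49,73}, {0,6,17,38}, {0,8,30,42}, {0,9,37,64}, {0,10,45,63}}
  | 15 => {{0,1,44,50}, {0,2,72,83}, {0,3,27,56}, {0,4,39,62}, {0,5,59,76}, {0,8,21,33},
      {0,10,26,48}}
  | 17 => {{0,1,25,94}, {0,2,42,88}, {0,3,84,95}, {0,4,30,57}, {0,5,44,64}, {0,6,47,79},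
      {0,12,31,66}, {0,13,28,50}}
  | 19 => {{0,1,25,108}, {0,2,42,65}, {0,3,16,78}, {0,4,9,106}, {0,10,30,58}, {0,11,61,79},
      {0,14,41,85}, {0,15,60,92}, {0,21,47,80}}
  | 21 => {{0,1,60,109}, {0,2,113,123}, {0,4,26,38}, {0,6,62,81}, {0,7,47,102}, {0,8,35,44},
      {0,11,48,76}, {0,14,43,68}, {0,16,46,103}, {0,20,52,93}}
  | 23 => {{0,1,130,133}, {0,2,95,110}, {0,4,66,105}, {0,7,98,125}, {0,10,48,67}, {0,11,25,89},
      {0,12,53,116}, {0,16,70,96}, {0,17,61,120}, {0,21,73,109}, {0,24,56,107}}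
  | 25 => {{0,1,71,134}, {0,2,119,140}, {0,3,40,85}, {0,4,48,55}, {0,5,67,86}, {0,6,60,136},
      {0,8,109,135}, {0,9,27,38}, {0,13,59,116}, {0,22,58,111}, {0,24,56,122}, {0,30,73,108}}
  | 27 => {{0,1,42,148}, {0,2,124,152}, {0,3,53,105}, {0,4,78,111}, {0,5,70,90}, {0,6,35,93},
      {0,7,130,143}, {0,8,31,94}, {0,9,98,128}, {0,11,47,114}, {0,16,96,141}, {0,17,61,79},
      {0,22,46,71}}
  | 29 => {{0,1,135,156}, {0,2,16,117}, {0,3,132,136}, {0,5,84,128}, {0,6,36,91}, {0,7,35,121},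
      {0,8,71,149}, {0,9,70,81}, {0,10,64,77}, {0,12,137,152}, {0,17,69,143}, {0,20,82,147},
      {0,23,99,131}, {0,24,50,118}}
  | 31 => {{0,1,42,136}, {0,2,109,165}, {0,3,49,177}, {0,4,112,173}, {0,5,45,65}, {0,6,105,164},
      {0,7,95,129}, {0,8,114,147}, {0,10,96,172}, {0,11,48,66}, {0,15,44,69}, {0,16,84,119},
      {0,19,104,134}, {0,26,53,89}, {0,32,75,148}}
  | 33 => {{0,1,127,146}, {0,2,162,186}, {0,3,104,159}, {0,4,62,106}, {0,5,15,157}, {0,6,88,117},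
      {0,7,85,180}, {0,8,67,137}, {0,9,158,185}, {0,11,90,164}, {0,16,114,177}, {0,17,68,151},
      {0,20,48,80}, {0,23,109,144}, {0,26,91,167}, {0,30,105,155}}
  | 35 => {{0,1,61,65}, {0,2,126,182}, {0,3,79,193}, {0,5,32,68}, {0,6,161,195}, {0,7,53,92},
      {0,8,88,181}, {0,9,25,75}, {0,10,51,62}, {0,12,83,165}, {0,13,120,179}, {0,14,47,116},
      {0,18,72,115}, {0,19,100,123}, {0,22,48,121}, {0,24,91,133}, {0,38,112,170}}
  | _ => 0

theorem card_of_mem_baseBlocks :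
    ∀ g ∈ (Finset.Icc 7 35).filter Odd, ∀ F ∈ baseBlocks g, F.card = 4 := by
  decide +kernel

theorem count_bind_blockDiffs_baseBlocks :
    ∀ g ∈ (Finset.Icc 7 35).filter Odd, ∀ n : ℕ, n < g * 6 →
    ((baseBlocks g).bind blockDiffs).count (n : ZMod (g * 6)) = if g ∣ n then 0 else 1 := by
  decide +kernel

/-- A `(6g,6,4,1)`-CDF exists for every odd integer `g` with `7 ≤ g ≤ 35`. -/
theorem stmt_10 (g : ℕ) (hodd : Odd g) (h1 : 7 ≤ g) (h2 : g ≤ 35) :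
    ∃ 𝓕 : Multiset (Finset (ZMod (g * 6))), IsCDF g 6 4 𝓕 := by
  have hg : g ∈ (Finset.Icc 7 35).filter Odd :=
    Finset.mem_filter.mpr ⟨Finset.mem_Icc.mpr ⟨h1, h2⟩, hodd⟩
  have : NeZero (g * 6) := ⟨by omega⟩
  exact ⟨baseBlocks g, isCDF_of_count_natCast (card_of_mem_baseBlocks g hg)
    (count_bind_blockDiffs_baseBlocks g hg)⟩
end
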